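/- Every regular tetrahedron with all four vertices in ℤ³ has side length of the form n√2 for some positive integer n. -/
import Mathlib

noncomputable def intVec (v : Fin 3 → ℤ) : EuclideanSpace ℝ (Fin 3) :=
  (WithLp.equiv 2 (Fin 3 → ℝ)).symm fun i => (v i : ℝ)

lemma distSq (X Y : Fin 3 → ℤ) :
    dist (intVec X) (intVec Y) ^ 2 = ((∑ i, (X i - Y i)^2 : ℤ) : ℝ) := by
  rw [EuclideanSpace.dist_eq, Real.sq_sqrt (by positivity)]
  push_cast
  simp [intVec, Real.dist_eq, sq_abs]

lemma sq_of_cube_eq_sq (t j : ℕ) (h : j ^ 2 = t ^ 3) : ∃ n : ℕ, t = n ^ 2 := by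
  rcases Nat.eq_zero_or_pos t with ht | ht
  · exact ⟨0, by simp [ht]⟩
  set g := Nat.gcd t j with hg
  have hg0 : 0 < g := Nat.gcd_pos_of_pos_left _ ht
  set a := t / g with ha
  set b := j / g with hb
  have hta : t = g * a := (Nat.div_mul_cancel (Nat.gcd_dvd_left t j)).symm.trans (mul_comm a g)
  have hjb : j = g * b := (Nat.div_mul_cancel (Nat.gcd_dvd_right t j)).symm.trans (mul_comm b g)
  have hco : Nat.Coprime a b := Nat.coprime_div_gcd_div_gcd hg0
  have key : b ^ 2 = g * a ^ 3 := by
    have h2 : g ^ 2 * b ^ 2 = g ^ 2 * (g * a ^ 3) := by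
      rw [hta, hjb] at h; ring_nf at h ⊢; linarith [h]
    exact Nat.eq_of_mul_eq_mul_left (by positivity) h2
  have hab : a ∣ b ^ 2 := key ▸ Dvd.dvd.mul_left (dvd_pow_self a (by norm_num)) g
  have ha1 : a = 1 := (Nat.Coprime.pow_right 2 hco).eq_one_of_dvd hab
  exact ⟨b, by rw [hta, ha1, mul_one]; rw [ha1] at key; simpa using key.symm⟩

/-- Every regular tetrahedron with vertices in `ℤ³` has side length `n√2`
for some positive integer `n`. -/
theorem regular_tetrahedron_side_length (A B C D : Fin 3 → ℤ)
    (hAB : A ≠ B) (hAC : A ≠ C) (hAD : A ≠ D) (hBC : B ≠ C) (hBD : B ≠ D) (hCD : C ≠ D)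
    (h1 : dist (intVec A) (intVec B) = dist (intVec A) (intVec C))
    (h2 : dist (intVec A) (intVec C) = dist (intVec A) (intVec D))
    (h3 : dist (intVec A) (intVec D) = dist (intVec B) (intVec C))
    (h4 : dist (intVec B) (intVec C) = dist (intVec B) (intVec D))
    (h5 : dist (intVec B) (intVec D) = dist (intVec C) (intVec D)) :
    ∃ n : ℕ, 0 < n ∧ dist (intVec A) (intVec B) = n * Real.sqrt 2 := by
  set e : (Fin 3 → ℤ) → (Fin 3 → ℤ) → ℤ := fun X Y => ∑ i, (X i - Y i)^2 with he
  have cast_eq : ∀ X Y X' Y', dist (intVec X) (intVec Y) = dist (intVec X') (intVec Y') →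
      e X Y = e X' Y' := by
    intro X Y X' Y' h
    have := congrArg (· ^ 2) h
    simp only [distSq] at this
    exact_mod_cast this
  set d : ℤ := e A B with hd
  have eAC : e A C = d := (cast_eq _ _ _ _ h1).symm
  have eAD : e A D = d := (cast_eq _ _ _ _ h2).symm.trans eAC
  have eBC : e B C = d := (cast_eq _ _ _ _ h3).symm.trans eAD
  have eBD : e B D = d := (cast_eq _ _ _ _ h4).symm.trans eBC
  have eCD : e C D = d := (cast_eq _ _ _ _ h5).symm.trans eBD
  set u : Fin 3 → ℤ := fun i => B i - A i with hu
  set v : Fin 3 → ℤ := fun i => C i - A i with hv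
  set w : Fin 3 → ℤ := fun i => D i - A i with hw
  have sum_uu : ∑ i, u i * u i = d := by
    rw [hd, he]; apply Finset.sum_congr rfl; intro i _; simp only [hu]; ring
  have sum_vv : ∑ i, v i * v i = d := by
    rw [← eAC, he]; apply Finset.sum_congr rfl; intro i _; simp only [hv]; ring
  have sum_ww : ∑ i, w i * w i = d := by
    rw [← eAD, he]; apply Finset.sum_congr rfl; intro i _; simp only [hw]; ring
  have expand : ∀ (p q X Y : Fin 3 → ℤ),
      (∀ i, X i - Y i = p i - q i) →
      e X Y = (∑ i, p i * p i) + (∑ i, q i * q i) - 2 * ∑ i, p i * q i := by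
    intro p q X Y h
    rw [he]
    simp only [h, Fin.sum_univ_three]
    ring
  have huv : 2 * ∑ i, u i * v i = d := by
    have := expand u v B C (fun i => by simp only [hu, hv]; ring)
    rw [sum_uu, sum_vv, eBC] at this; linarith
  have huw : 2 * ∑ i, u i * w i = d := by
    have := expand u w B D (fun i => by simp only [hu, hw]; ring)
    rw [sum_uu, sum_ww, eBD] at this; linarith
  have hvw : 2 * ∑ i, v i * w i = d := by
    have := expand v w C D (fun i => by simp only [hv, hw]; ring)
    rw [sum_vv, sum_ww, eCD] at this; linarith
  set t : ℤ := ∑ i, u i * v i with htdef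
  have hd2t : d = 2 * t := huv.symm
  have huw' : ∑ i, u i * w i = t := by omega
  have hvw' : ∑ i, v i * w i = t := by omega
  -- determinant of (u v w) and the Cauchy–Binet / Gram identity
  set Δ : ℤ := u 0 * (v 1 * w 2 - v 2 * w 1) - u 1 * (v 0 * w 2 - v 2 * w 0)
      + u 2 * (v 0 * w 1 - v 1 * w 0) with hΔ
  have gram : Δ ^ 2 = (∑ i, u i * u i) * (∑ i, v i * v i) * (∑ i, w i * w i)
      + 2 * (∑ i, u i * v i) * (∑ i, u i * w i) * (∑ i, v i * w i)
      - (∑ i, u i * u i) * (∑ i, v i * w i) ^ 2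
      - (∑ i, v i * v i) * (∑ i, u i * w i) ^ 2
      - (∑ i, w i * w i) * (∑ i, u i * v i) ^ 2 := by
    simp only [hΔ, Fin.sum_univ_three]
    ring
  have hdet : Δ ^ 2 = 4 * t ^ 3 := by
    rw [gram, sum_uu, sum_vv, sum_ww, ← htdef, huw', hvw', hd2t]; ring
  have hdpos : 0 < d := by
    have hne : intVec A ≠ intVec B := by
      intro h
      apply hAB
      funext i
      have := congrFun (congrArg (WithLp.equiv 2 (Fin 3 → ℝ)) h) i
      simpa [intVec] using this
    have : (0:ℝ) < (d:ℝ) := by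
      have hpos : 0 < dist (intVec A) (intVec B) := dist_pos.mpr hne
      have hds : dist (intVec A) (intVec B) ^ 2 = ((d:ℤ):ℝ) := by
        rw [distSq]
      rw [← hds]; positivity
    exact_mod_cast this
  have htpos : 0 < t := by omega
  set tn : ℕ := t.toNat with htn
  have htn' : (tn : ℤ) = t := Int.toNat_of_nonneg htpos.le
  set k : ℕ := Δ.natAbs with hk
  have hk2 : k ^ 2 = 4 * tn ^ 3 := by
    have h' : ((k : ℤ)) ^ 2 = 4 * (tn:ℤ) ^ 3 := by
      rw [htn', hk]
      rw [show ((Δ.natAbs : ℤ)) ^ 2 = Δ ^ 2 from by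
        rw [Int.natAbs_pow_two] <;> simp [sq_abs]]
      exact hdet
    exact_mod_cast h'
  have h2k : 2 ∣ k := by
    have : 2 ∣ k ^ 2 := by rw [hk2]; exact ⟨2 * tn ^ 3, by ring⟩
    exact Nat.Prime.dvd_of_dvd_pow Nat.prime_two this
  obtain ⟨j, hj⟩ := h2k
  have hj2 : j ^ 2 = tn ^ 3 := by
    have : 4 * j ^ 2 = 4 * tn ^ 3 := by rw [← hk2, hj]; ring
    omega
  obtain ⟨n, hn⟩ := sq_of_cube_eq_sq tn j hj2
  have hnpos : 0 < n := by
    rcases Nat.eq_zero_or_pos n with h0 | h0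
    · exfalso; rw [h0] at hn; simp at hn; omega
    · exact h0
  refine ⟨n, hnpos, ?_⟩
  have hdn : ((d:ℤ) : ℝ) = 2 * (n:ℝ)^2 := by
    have h' : d = 2 * (n:ℤ)^2 := by rw [hd2t, ← htn', hn]; push_cast; ring
    rw [h']; push_cast; ring
  have hsq : dist (intVec A) (intVec B) ^ 2 = ((n:ℝ) * Real.sqrt 2) ^ 2 := by
    have hds : ((∑ i, (A i - B i)^2 : ℤ) : ℝ) = ((d:ℤ):ℝ) := by norm_cast
    rw [distSq, hds, hdn, mul_pow, Real.sq_sqrt (by norm_num : (0:ℝ) ≤ 2)]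
    ring
  calc dist (intVec A) (intVec B)
      = Real.sqrt (dist (intVec A) (intVec B) ^ 2) := (Real.sqrt_sq dist_nonneg).symm
    _ = Real.sqrt (((n:ℝ) * Real.sqrt 2) ^ 2) := by rw [hsq]
    _ = (n:ℝ) * Real.sqrt 2 := Real.sqrt_sq (by positivity)
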